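/- Let ⟨𝒬, Q₀⟩ be the instance produced by the reduction from an OGTP instance ⟨𝒮, ℱ⟩, and suppose H is a final position of a play of Escape(Q₀, 𝒬) that started from D₀ = (G(q))[a,b] with q ∈ Q_start. Then: (1) every edge of H labeled with G(α), R(α), G(β) or R(β) begins in a; (2) every edge of H labeled with G(ω) or R(ω) ends in b. -/

import Mathlib

/-- A graph database (structure) over vertex type `V` and edge-label alphabet `γ`:
`D x c y` means that there is an edge from `x` to `y` labeled with `c`. -/
def DB (V γ : Type) : Type := V → γ → V → Prop

/-- `pathSat D x w y` : the structure `D` satisfies `w(x,y)`, i.e. there is a directed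
path from `x` to `y` whose consecutive edge labels spell the word `w`. -/
def pathSat {V γ : Type} (D : DB V γ) : V → List γ → V → Prop
  | x, [], y => x = y
  | x, c :: w, y => ∃ z, D x c z ∧ pathSat D z w y

/-- `D ⊨ L(x,y)` for a language `L` : some word of `L` labels a path from `x` to `y`. -/
def langSat {V γ : Type} (D : DB V γ) (L : Language γ) (x y : V) : Prop :=
  ∃ w ∈ L, pathSat D x w y

/-- The answer `L(D)` of the path query given by the language `L` on the database `D`. -/
def qry {V γ : Type} (L : Language γ) (D : DB V γ) : Set (V × V) :=
  { p | langSat D L p.1 p.2 }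

/-- All edge labels of `D` lie in the set `A`. -/
def labelsIn {V γ : Type} (D : DB V γ) (A : Set γ) : Prop :=
  ∀ x c y, D x c y → c ∈ A

/-- A language is regular iff it is the language of some regular expression. -/
def IsRegularLang {γ : Type} (L : Language γ) : Prop :=
  ∃ r : RegularExpression γ, r.matches' = L

/-! ### Red-green signature.  A letter of `Σ̄` is a pair `(color, a)` with
`color = true` meaning green and `color = false` meaning red. -/

/-- The green copy `G(w)` of a word `w`. -/
def greenW {γ : Type} (w : List γ) : List (Bool × γ) := w.map (fun c => (true, c))

/-- The red copy `R(w)` of a word `w`. -/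
def redW {γ : Type} (w : List γ) : List (Bool × γ) := w.map (fun c => (false, c))

/-- The green copy `G(L)` of a language `L`. -/
def greenL {γ : Type} (L : Language γ) : Language (Bool × γ) := greenW '' L

/-- The red copy `R(L)` of a language `L`. -/
def redL {γ : Type} (L : Language γ) : Language (Bool × γ) := redW '' L

/-- A constraint `L → L'` given by a pair of languages,
meaning `∀ x y, L(x,y) ⇒ L'(x,y)`. -/
structure RCon (γ : Type) where
  lhs : Language γ
  rhs : Language γ

/-- `D ⊨ t` for a single constraint `t`. -/
def satRC {V γ : Type} (D : DB V γ) (t : RCon γ) : Prop :=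
  ∀ x y, langSat D t.lhs x y → langSat D t.rhs x y

/-- `D ⊨ T` for a set `T` of constraints. -/
def satRCs {V γ : Type} (D : DB V γ) (T : Set (RCon γ)) : Prop :=
  ∀ t ∈ T, satRC D t

/-- `L→`, the regular constraint `G(L) → R(L)`. -/
def rcFwd {γ : Type} (L : Language γ) : RCon (Bool × γ) := ⟨greenL L, redL L⟩

/-- `L←`, the regular constraint `R(L) → G(L)`. -/
def rcBwd {γ : Type} (L : Language γ) : RCon (Bool × γ) := ⟨redL L, greenL L⟩

/-- `𝒬↔ = ⋃_{L ∈ 𝒬} {L→, L←}`. -/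
def biRC {γ : Type} (Qs : Set (Language γ)) : Set (RCon (Bool × γ)) :=
  rcFwd '' Qs ∪ rcBwd '' Qs

/-- A request is a triple `⟨x, y, t⟩`. -/
abbrev Req (V γ : Type) := V × V × RCon γ

/-- `rq T D` : the set of requests `⟨x,y,L→L'⟩` with `L → L' ∈ T`, `D ⊨ L(x,y)`
and `D ⊭ L'(x,y)`. -/
def rq {V γ : Type} (T : Set (RCon γ)) (D : DB V γ) : Set (Req V γ) :=
  { r | r.2.2 ∈ T ∧ langSat D r.2.2.lhs r.1 r.2.1 ∧ ¬ langSat D r.2.2.rhs r.1 r.2.1 }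

/-- A vertex of (i.e. active in) the structure `D`. -/
def activeV {V γ : Type} (D : DB V γ) (v : V) : Prop :=
  ∃ c u, D v c u ∨ D u c v

/-- The edge set of a chain whose consecutive vertices are listed in the first argument
and whose edge labels spell the second argument.  -/
def chainOf {V γ : Type} : List V → List γ → DB V γ
  | u :: v :: vs, c :: w => fun p d q => (p = u ∧ d = c ∧ q = v) ∨ chainOf (v :: vs) w p d q
  | _, _ => fun _ _ _ => False

/-- `D` is (exactly) the chain structure `w[x,y]` : its edges form a chain from `x` to `y`
labeled `w`, whose internal vertices are pairwise distinct and distinct from `x, y`. -/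
def IsChainStruct {V γ : Type} (D : DB V γ) (x : V) (w : List γ) (y : V) : Prop :=
  ∃ vs : List V, vs.length + 1 = w.length ∧ (x :: vs ++ [y]).Nodup ∧
    ∀ p c q, D p c q ↔ chainOf (x :: vs ++ [y]) w p c q

/-- `Step T D D'` : `D'` is obtained from `D` by simultaneously satisfying every request of
`rq T D` : for each request `⟨x,y,t⟩` a word `w` of the right-hand side of `t` is chosen and a
fresh path `w[x,y]` is added, the internal vertices of all the added paths being new
(not vertices of `D`) and pairwise distinct. -/
def Step {V γ : Type} (T : Set (RCon γ)) (D D' : DB V γ) : Prop :=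
  ∃ (wch : Req V γ → List γ) (vch : Req V γ → List V),
    (∀ r ∈ rq T D,
      wch r ∈ (r.2.2).rhs ∧ (vch r).length + 1 = (wch r).length ∧ (vch r).Nodup ∧
      ∀ v ∈ vch r, ¬ activeV D v ∧ v ≠ r.1 ∧ v ≠ r.2.1) ∧
    (∀ r ∈ rq T D, ∀ r' ∈ rq T D, r ≠ r' → ∀ v ∈ vch r, v ∉ vch r') ∧
    ∀ p c q, D' p c q ↔
      (D p c q ∨ ∃ r ∈ rq T D, chainOf (r.1 :: vch r ++ [r.2.1]) (wch r) p c q)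

/-- `H ∈ Ω(T, D₀)` : `H` is a final position, namely the union of a play
`D₀, D₁, D₂, …` with `Step T Dᵢ Dᵢ₊₁` for all `i`. -/
def FinalPos {V γ : Type} (T : Set (RCon γ)) (D₀ H : DB V γ) : Prop :=
  ∃ seq : ℕ → DB V γ, seq 0 = D₀ ∧ (∀ i, Step T (seq i) (seq (i + 1))) ∧
    ∀ p c q, H p c q ↔ ∃ i, seq i p c q

/-- `h` is a homomorphism from `D` to `M`. -/
def IsHom {V W γ : Type} (D : DB V γ) (M : DB W γ) (h : V → W) : Prop :=
  ∀ x c y, D x c y → M (h x) c (h y)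

/-! ### The alphabet of the reduction.
`Σ = {α, β, ω} ∪ Σ₀` with `Σ₀ = {A,B} × {H,V} × {W,C} × 𝒮`.
Conventions: in `Sig.base ab dir temp shade`,
`ab = true` means `A` and `ab = false` means `B`;
`dir = false` means `H` (horizontal) and `dir = true` means `V` (vertical);
`temp = true` means `W` (warm) and `temp = false` means `C` (cold);
shades are natural numbers, `black := 0`. -/
inductive Sig : Type where
  | alpha : Sig
  | beta : Sig
  | omega : Sig
  | base : Bool → Bool → Bool → ℕ → Sig
deriving DecidableEq

/-- `c` is a letter of `Σ₀` (its shade belonging to `S`). -/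
def inSigma0 (S : Finset ℕ) : Sig → Prop
  | .base _ _ _ s => s ∈ S
  | _ => False

/-- `c` is a letter of `Σ₀` with the indicated first three components
(its shade ranging over `S`). -/
def isL (S : Finset ℕ) (ab dir temp : Bool) (c : Sig) : Prop :=
  ∃ s ∈ S, c = Sig.base ab dir temp s

/-- All letters of the word `u` belong to `Σ₀`. -/
def allS0 (S : Finset ℕ) (u : List Sig) : Prop := ∀ c ∈ u, inSigma0 S c

/-- `Q¹ = ω`. -/
def Qg1 : Language Sig := {[Sig.omega]}

/-- `Q² = α + β`. -/
def Qg2 : Language Sig := {[Sig.alpha], [Sig.beta]}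

/-- `[B H W][A V W]`, the first summand of `Q³`. -/
def Qg3a (S : Finset ℕ) : Language Sig :=
  { w | ∃ c1 c2, w = [c1, c2] ∧ isL S false false true c1 ∧ isL S true true true c2 }

/-- `[B V C][A H C]`, the second summand of `Q³`. -/
def Qg3b (S : Finset ℕ) : Language Sig :=
  { w | ∃ c1 c2, w = [c1, c2] ∧ isL S false true false c1 ∧ isL S true false false c2 }

/-- `[A H C][B V C]`, the first summand of `Q⁴`. -/
def Qg4a (S : Finset ℕ) : Language Sig :=
  { w | ∃ c1 c2, w = [c1, c2] ∧ isL S true false false c1 ∧ isL S false true false c2 }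

/-- `[A V W][B H W]`, the second summand of `Q⁴`. -/
def Qg4b (S : Finset ℕ) : Language Sig :=
  { w | ∃ c1 c2, w = [c1, c2] ∧ isL S true true true c1 ∧ isL S false false true c2 }

/-- `[B V C]`, the first summand of `Q⁵`. -/
def Qg5a (S : Finset ℕ) : Language Sig := { w | ∃ c, w = [c] ∧ isL S false true false c }

/-- `[B V W]`, the second summand of `Q⁵`. -/
def Qg5b (S : Finset ℕ) : Language Sig := { w | ∃ c, w = [c] ∧ isL S false true true c }

/-- `[B H W]`, the first summand of `Q⁶`. -/
def Qg6a (S : Finset ℕ) : Language Sig := { w | ∃ c, w = [c] ∧ isL S false false true c }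

/-- `[B H C]`, the second summand of `Q⁶`. -/
def Qg6b (S : Finset ℕ) : Language Sig := { w | ∃ c, w = [c] ∧ isL S false false false c }

/-- `[A V W]`, the first summand of `Q⁷`. -/
def Qg7a (S : Finset ℕ) : Language Sig := { w | ∃ c, w = [c] ∧ isL S true true true c }

/-- `[A V C]`, the second summand of `Q⁷`. -/
def Qg7b (S : Finset ℕ) : Language Sig := { w | ∃ c, w = [c] ∧ isL S true true false c }

/-- `[A H C]`, the first summand of `Q⁸`. -/
def Qg8a (S : Finset ℕ) : Language Sig := { w | ∃ c, w = [c] ∧ isL S true false false c }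

/-- `[A H W]`, the second summand of `Q⁸`. -/
def Qg8b (S : Finset ℕ) : Language Sig := { w | ∃ c, w = [c] ∧ isL S true false true c }

/-- `𝒬_good`, the set of 8 good languages. -/
def Qgood (S : Finset ℕ) : Set (Language Sig) :=
  {Qg1, Qg2, Qg3a S + Qg3b S, Qg4a S + Qg4b S, Qg5a S + Qg5b S,
   Qg6a S + Qg6b S, Qg7a S + Qg7b S, Qg8a S + Qg8b S}

/-- `β (Σ_{s ∈ 𝒮∖{black}} [A V W s]) Σ₀* ω`. -/
def Qbad1 (S : Finset ℕ) : Language Sig :=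
  { w | ∃ s u, s ∈ S ∧ s ≠ 0 ∧ allS0 S u ∧
      w = Sig.beta :: Sig.base true true true s :: (u ++ [Sig.omega]) }

/-- `β Σ₀* (Σ_{s ∈ 𝒮∖{black}} [B H W s]) ω`. -/
def Qbad2 (S : Finset ℕ) : Language Sig :=
  { w | ∃ s u, s ∈ S ∧ s ≠ 0 ∧ allS0 S u ∧
      w = Sig.beta :: (u ++ [Sig.base false false true s, Sig.omega]) }

/-- `β Σ₀* [• d W s][• d' W s'] Σ₀* ω`, for a forbidden pair `⟨(d,s),(d',s')⟩`. -/
def QbadF (S : Finset ℕ) (d : Bool) (s : ℕ) (d' : Bool) (s' : ℕ) : Language Sig :=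
  { w | ∃ u u', ∃ b b' : Bool, allS0 S u ∧ allS0 S u' ∧
      w = Sig.beta :: (u ++ Sig.base b d true s :: Sig.base b' d' true s' :: (u' ++ [Sig.omega])) }

/-- `𝒬_bad`. -/
def Qbad (S : Finset ℕ) (F : Finset ((Bool × ℕ) × (Bool × ℕ))) : Set (Language Sig) :=
  {Qbad1 S, Qbad2 S} ∪ { L | ∃ p ∈ F, L = QbadF S p.1.1 p.1.2 p.2.1 p.2.2 }

/-- `α Σ₀* [• • W] Σ₀* ω`. -/
def Qugly1 (S : Finset ℕ) : Language Sig :=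
  { w | ∃ u c u', allS0 S u ∧ allS0 S u' ∧ inSigma0 S c ∧
      (∃ ab d s, c = Sig.base ab d true s) ∧
      w = Sig.alpha :: (u ++ c :: (u' ++ [Sig.omega])) }

/-- `β Σ₀* [• • C] Σ₀* ω`. -/
def Qugly2 (S : Finset ℕ) : Language Sig :=
  { w | ∃ u c u', allS0 S u ∧ allS0 S u' ∧ inSigma0 S c ∧
      (∃ ab d s, c = Sig.base ab d false s) ∧
      w = Sig.beta :: (u ++ c :: (u' ++ [Sig.omega])) }

/-- `𝒬_ugly`. -/
def Qugly (S : Finset ℕ) : Set (Language Sig) := {Qugly1 S, Qugly2 S}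

/-- `𝒬 = 𝒬_good ∪ 𝒬_bad ∪ 𝒬_ugly`. -/
def QQ (S : Finset ℕ) (F : Finset ((Bool × ℕ) × (Bool × ℕ))) : Set (Language Sig) :=
  Qgood S ∪ Qbad S F ∪ Qugly S

/-- `[A H C][B V C]`, the repeated block of `Q_start`. -/
def startBlock (S : Finset ℕ) : Language Sig :=
  { w | ∃ c1 c2, w = [c1, c2] ∧ isL S true false false c1 ∧ isL S false true false c2 }

/-- `Q_start = α ([A H C][B V C])⁺ ω`. -/
def Qstart (S : Finset ℕ) : Language Sig :=
  { w | ∃ u, u ∈ KStar.kstar (startBlock S) ∧ u ≠ [] ∧ w = Sig.alpha :: (u ++ [Sig.omega]) }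

/-- The sum of the languages `QbadF` over all forbidden pairs of `F`. -/
def QbadFSum (S : Finset ℕ) (F : Finset ((Bool × ℕ) × (Bool × ℕ))) : Language Sig :=
  { w | ∃ p ∈ F, w ∈ QbadF S p.1.1 p.1.2 p.2.1 p.2.2 }

/-- `Q₀ = Q_start + Σ_{L ∈ 𝒬_bad ∪ 𝒬_ugly} L`. -/
def Q0L (S : Finset ℕ) (F : Finset ((Bool × ℕ) × (Bool × ℕ))) : Language Sig :=
  Qstart S + Qbad1 S + Qbad2 S + QbadFSum S F + Qugly1 S + Qugly2 S

/-- The alphabet `Σ = {α, β, ω} ∪ Σ₀` of the reduction, as a set of letters. -/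
def SigAlph (S : Finset ℕ) : Set Sig :=
  {Sig.alpha, Sig.beta, Sig.omega} ∪ { c | inSigma0 S c }

/-! The invariant is that every `α`/`β`-edge leaves `a` and every `ω`-edge enters `b`. The
initial chain `α u ω` satisfies it. In every language of `𝒬`, an `α`/`β` letter can only stand
at the head of a word, and if one word has it then all words do; dually for `ω` at the end.
A request `⟨x, y, L → L'⟩` is witnessed by a word of `L` spelling a path from `x` to `y`, so
if the added word starts with `α`/`β`, the witness path starts with an `α`/`β`-edge leaving
`x`, whence `x = a`; symmetrically for `ω` and `y = b`. -/

section Chains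

variable {V γ : Type}

lemma pathSat_append (D : DB V γ) (u w : List γ) (x y : V) :
    pathSat D x (u ++ w) y ↔ ∃ z, pathSat D x u z ∧ pathSat D z w y := by
  induction u generalizing x with
  | nil => simp [pathSat]
  | cons c u ih => simp only [List.cons_append, pathSat, ih]; grind

lemma chainOf_mem : ∀ {nodes : List V} {w : List γ} {p q : V} {c : γ},
    chainOf nodes w p c q → c ∈ w
  | _ :: _ :: _, _ :: _, _, _, _, .inl ⟨_, rfl, _⟩ => List.mem_cons_self
  | _ :: _ :: _, _ :: _, _, _, _, .inr h => List.mem_cons_of_mem _ (chainOf_mem h)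
  | [], _, _, _, _, h | [_], _, _, _, _, h | _ :: _ :: _, [], _, _, _, h => nomatch h

lemma eq_of_chainOf_of_not_mem_tail {x p q : V} {vs : List V} {w : List γ} {c : γ}
    (h : chainOf (x :: vs) w p c q) (hc : c ∉ w.tail) : p = x :=
  match vs, w, h with
  | _ :: _, _ :: _, .inl ⟨hp, _⟩ => hp
  | _ :: _, _ :: _, .inr h => absurd (chainOf_mem h) hc
  | [], _, h | _ :: _, [], h => nomatch h

lemma eq_of_chainOf_of_not_mem_dropLast {x y p q : V} {vs : List V} {w : List γ} {c : γ}
    (hlen : vs.length + 1 = w.length) (h : chainOf (x :: vs ++ [y]) w p c q)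
    (hc : c ∉ w.dropLast) : q = y := by
  induction vs generalizing x w with
  | nil =>
    obtain ⟨d, rfl⟩ := List.length_eq_one_iff.mp hlen.symm
    rcases h with ⟨-, -, rfl⟩ | h
    · rfl
    · cases h
  | cons v vs ih =>
    obtain ⟨d, w, rfl⟩ := List.exists_cons_of_length_eq_add_one hlen.symm
    have hw : w ≠ [] := by rintro rfl; simp at hlen
    rw [List.dropLast_cons_of_ne_nil hw, List.mem_cons, not_or] at hc
    rcases h with ⟨-, rfl, -⟩ | h
    · exact absurd rfl hc.1
    · exact ih (by simpa using hlen) h hc.2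

end Chains

section Markers

variable {V γ : Type}

def MarkedAtHead (P : γ → Prop) (L : Language γ) : Prop :=
  ∀ v ∈ L, ∀ v' ∈ L, ∀ c ∈ v', P c → (∃ d u, v = d :: u ∧ P d) ∧ ∀ e ∈ v'.tail, ¬ P e

def MarkedAtLast (P : γ → Prop) (L : Language γ) : Prop :=
  ∀ v ∈ L, ∀ v' ∈ L, ∀ c ∈ v', P c → (∃ u d, v = u ++ [d] ∧ P d) ∧ ∀ e ∈ v'.dropLast, ¬ P e

lemma MarkedAtHead.mono {P : γ → Prop} {L L' : Language γ} (h : MarkedAtHead P L')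
    (hL : L ≤ L') : MarkedAtHead P L :=
  fun v hv v' hv' => h v (hL hv) v' (hL hv')

lemma MarkedAtLast.mono {P : γ → Prop} {L L' : Language γ} (h : MarkedAtLast P L')
    (hL : L ≤ L') : MarkedAtLast P L :=
  fun v hv v' hv' => h v (hL hv) v' (hL hv')

lemma markedAtHead_of_forall_not {P : γ → Prop} {L : Language γ}
    (h : ∀ v ∈ L, ∀ c ∈ v, ¬ P c) : MarkedAtHead P L :=
  fun _ _ v' hv' c hc hPc => absurd hPc (h v' hv' c hc)

lemma markedAtLast_of_forall_not {P : γ → Prop} {L : Language γ}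
    (h : ∀ v ∈ L, ∀ c ∈ v, ¬ P c) : MarkedAtLast P L :=
  fun _ _ v' hv' c hc hPc => absurd hPc (h v' hv' c hc)

lemma MarkedAtHead.eq_of_chainOf {P : γ → Prop} {L : Language γ} (hL : MarkedAtHead P L)
    {v : List γ} (hv : v ∈ L) {col : Bool} {x p q : V} {vs : List V} {c : Bool × γ}
    (h : chainOf (x :: vs) (v.map (Prod.mk col)) p c q) (hc : P c.2) : p = x := by
  obtain ⟨e, he, rfl⟩ := List.mem_map.mp (chainOf_mem h)
  refine eq_of_chainOf_of_not_mem_tail h fun he' => ?_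
  rw [← List.map_tail, List.mem_map] at he'
  obtain ⟨e', he', he'e⟩ := he'
  cases he'e
  exact (hL v hv v hv e he hc).2 e he' hc

lemma MarkedAtLast.eq_of_chainOf {P : γ → Prop} {L : Language γ} (hL : MarkedAtLast P L)
    {v : List γ} (hv : v ∈ L) {col : Bool} {x y p q : V} {vs : List V} {c : Bool × γ}
    (hlen : vs.length + 1 = v.length)
    (h : chainOf (x :: vs ++ [y]) (v.map (Prod.mk col)) p c q) (hc : P c.2) : q = y := by
  obtain ⟨e, he, rfl⟩ := List.mem_map.mp (chainOf_mem h)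
  refine eq_of_chainOf_of_not_mem_dropLast (by simpa using hlen) h fun he' => ?_
  rw [← List.map_dropLast, List.mem_map] at he'
  obtain ⟨e', he', he'e⟩ := he'
  cases he'e
  exact (hL v hv v hv e he hc).2 e he' hc

end Markers

section Play

variable {V γ : Type}

def EdgesStartAt (P : γ → Prop) (a : V) (D : DB V γ) : Prop :=
  ∀ x c y, D x c y → P c → x = a

def EdgesEndAt (P : γ → Prop) (b : V) (D : DB V γ) : Prop :=
  ∀ x c y, D x c y → P c → y = b

lemma exists_eq_of_mem_biRC {Qs : Set (Language γ)} {t : RCon (Bool × γ)} (ht : t ∈ biRC Qs) :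
    ∃ L ∈ Qs, ∃ ca cb : Bool, t = ⟨List.map (Prod.mk ca) '' L, List.map (Prod.mk cb) '' L⟩ := by
  rcases ht with ⟨L, hL, rfl⟩ | ⟨L, hL, rfl⟩
  exacts [⟨L, hL, true, false, rfl⟩, ⟨L, hL, false, true, rfl⟩]

lemma Step.edge_cases {Qs : Set (Language γ)} {D D' : DB V (Bool × γ)}
    (hs : Step (biRC Qs) D D') {p q : V} {c : Bool × γ} (h : D' p c q) :
    D p c q ∨ ∃ L ∈ Qs, ∃ (x y : V) (vs : List V) (v v' : List γ) (ca cb : Bool),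
      v ∈ L ∧ v' ∈ L ∧ pathSat D x (v.map (Prod.mk ca)) y ∧ vs.length + 1 = v'.length ∧
      chainOf (x :: vs ++ [y]) (v'.map (Prod.mk cb)) p c q := by
  obtain ⟨wch, vch, hreq, -, hD'⟩ := hs
  refine ((hD' p c q).mp h).imp id ?_
  rintro ⟨r, hr, hch⟩
  obtain ⟨hw, hlen, -⟩ := hreq r hr
  obtain ⟨x, y, t⟩ := r
  obtain ⟨ht, ⟨w, hw', hpath⟩, -⟩ := hr
  obtain ⟨L, hL, ca, cb, rfl⟩ := exists_eq_of_mem_biRC ht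
  obtain ⟨v, hv, rfl⟩ := hw'
  obtain ⟨v', hv', hwv'⟩ := hw
  rw [← hwv'] at hlen hch
  exact ⟨L, hL, x, y, vch (x, y, _), v, v', ca, cb, hv, hv', hpath, by simpa using hlen, hch⟩

lemma EdgesStartAt.step {P : γ → Prop} {Qs : Set (Language γ)} (hQs : ∀ L ∈ Qs, MarkedAtHead P L)
    {a : V} {D D' : DB V (Bool × γ)} (hD : EdgesStartAt (fun c => P c.2) a D)
    (hs : Step (biRC Qs) D D') : EdgesStartAt (fun c => P c.2) a D' := by
  intro p c q hpq hc
  rcases hs.edge_cases hpq with hpq | ⟨L, hL, x, y, vs, v, v', ca, cb, hv, hv', hpath, -, hch⟩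
  · exact hD p c q hpq hc
  obtain ⟨e, he, rfl⟩ := List.mem_map.mp (chainOf_mem hch)
  obtain ⟨d, u, rfl, hd⟩ := ((hQs L hL) v hv v' hv' e he hc).1
  obtain ⟨z, hxz, -⟩ := hpath
  rw [(hQs L hL).eq_of_chainOf hv' hch hc]
  exact hD x (ca, d) z hxz hd

lemma EdgesEndAt.step {P : γ → Prop} {Qs : Set (Language γ)} (hQs : ∀ L ∈ Qs, MarkedAtLast P L)
    {b : V} {D D' : DB V (Bool × γ)} (hD : EdgesEndAt (fun c => P c.2) b D)
    (hs : Step (biRC Qs) D D') : EdgesEndAt (fun c => P c.2) b D' := by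
  intro p c q hpq hc
  rcases hs.edge_cases hpq with hpq | ⟨L, hL, x, y, vs, v, v', ca, cb, hv, hv', hpath, hlen, hch⟩
  · exact hD p c q hpq hc
  obtain ⟨e, he, rfl⟩ := List.mem_map.mp (chainOf_mem hch)
  obtain ⟨u, d, rfl, hd⟩ := ((hQs L hL) v hv v' hv' e he hc).1
  rw [List.map_append, pathSat_append] at hpath
  obtain ⟨z, -, z', hzd, rfl⟩ := hpath
  rw [(hQs L hL).eq_of_chainOf hv' hlen hch hc]
  exact hD z (ca, d) z' hzd hd

lemma EdgesStartAt.of_isChainStruct {P : γ → Prop} {L : Language γ} (hL : MarkedAtHead P L)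
    {v : List γ} (hv : v ∈ L) {col : Bool} {x y : V} {D : DB V (Bool × γ)}
    (hD : IsChainStruct D x (v.map (Prod.mk col)) y) : EdgesStartAt (fun c => P c.2) x D := by
  obtain ⟨vs, -, -, hiff⟩ := hD
  exact fun p c q hpq hc => hL.eq_of_chainOf hv ((hiff p c q).mp hpq) hc

lemma EdgesEndAt.of_isChainStruct {P : γ → Prop} {L : Language γ} (hL : MarkedAtLast P L)
    {v : List γ} (hv : v ∈ L) {col : Bool} {x y : V} {D : DB V (Bool × γ)}
    (hD : IsChainStruct D x (v.map (Prod.mk col)) y) : EdgesEndAt (fun c => P c.2) y D := by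
  obtain ⟨vs, hlen, -, hiff⟩ := hD
  exact fun p c q hpq hc => hL.eq_of_chainOf hv (by simpa using hlen) ((hiff p c q).mp hpq) hc

lemma FinalPos.forall_edges {T : Set (RCon γ)} {D₀ H : DB V γ} {R : V → γ → V → Prop}
    (hH : FinalPos T D₀ H) (h₀ : ∀ x c y, D₀ x c y → R x c y)
    (hstep : ∀ D D', Step T D D' → (∀ x c y, D x c y → R x c y) → ∀ x c y, D' x c y → R x c y) :
    ∀ x c y, H x c y → R x c y := by
  obtain ⟨seq, rfl, hseq, hH⟩ := hH
  have hinv : ∀ i, ∀ x c y, seq i x c y → R x c y := fun i => by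
    induction i with
    | zero => exact h₀
    | succ i ih => exact hstep _ _ (hseq i) ih
  intro x c y hxy
  obtain ⟨i, hi⟩ := (hH x c y).mp hxy
  exact hinv i x c y hi

end Play

namespace Sig

def IsAlphaBeta (c : Sig) : Prop := c = alpha ∨ c = beta

def IsBase : Sig → Prop
  | base .. => True
  | _ => False

lemma IsBase.not_isAlphaBeta {c : Sig} (h : c.IsBase) : ¬ c.IsAlphaBeta := by
  cases c <;> simp_all [IsBase, IsAlphaBeta]

lemma IsBase.ne_omega {c : Sig} (h : c.IsBase) : c ≠ omega := by
  rintro rfl; exact h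

end Sig

lemma isL.isBase {S : Finset ℕ} {ab d t : Bool} {c : Sig} (h : isL S ab d t c) : c.IsBase := by
  obtain ⟨s, -, rfl⟩ := h; trivial

lemma inSigma0.isBase {S : Finset ℕ} {c : Sig} (h : inSigma0 S c) : c.IsBase := by
  cases c <;> first | exact h | trivial

lemma allS0.isBase {S : Finset ℕ} {u : List Sig} (h : allS0 S u) : ∀ c ∈ u, c.IsBase :=
  fun c hc => (h c hc).isBase

def framedLang : Language Sig :=
  { w | ∃ c u, c.IsAlphaBeta ∧ (∀ d ∈ u, d.IsBase) ∧ w = c :: (u ++ [Sig.omega]) }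

lemma markedAtHead_framedLang : MarkedAtHead Sig.IsAlphaBeta framedLang := by
  rintro _ ⟨c, u, hc, -, rfl⟩ _ ⟨c', u', -, hu', rfl⟩ - - -
  refine ⟨⟨c, _, rfl, hc⟩, fun e he => ?_⟩
  rcases List.mem_append.mp he with he | he
  · exact (hu' e he).not_isAlphaBeta
  · rw [List.mem_singleton.mp he]; simp [Sig.IsAlphaBeta]

lemma markedAtLast_framedLang : MarkedAtLast (· = Sig.omega) framedLang := by
  rintro _ ⟨c, u, -, -, rfl⟩ _ ⟨c', u', hc', hu', rfl⟩ - - -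
  refine ⟨⟨c :: u, _, rfl, rfl⟩, fun e he => ?_⟩
  rw [← List.cons_append, List.dropLast_concat] at he
  rcases List.mem_cons.mp he with rfl | he
  · rcases hc' with rfl | rfl <;> simp
  · exact (hu' e he).ne_omega

lemma Qstart_subset_framedLang (S : Finset ℕ) : Qstart S ≤ framedLang := by
  rintro _ ⟨u, hu, -, rfl⟩
  refine ⟨_, u, Or.inl rfl, fun d hd => ?_, rfl⟩
  obtain ⟨blocks, rfl, hblocks⟩ := Language.mem_kstar.mp hu
  obtain ⟨w, hw, hdw⟩ := List.mem_flatten.mp hd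
  obtain ⟨c1, c2, rfl, h1, h2⟩ := hblocks w hw
  rcases List.mem_pair.mp hdw with rfl | rfl
  exacts [h1.isBase, h2.isBase]

lemma Qbad_subset_framedLang {S : Finset ℕ} {F : Finset ((Bool × ℕ) × (Bool × ℕ))}
    {L : Language Sig} (hL : L ∈ Qbad S F) : L ≤ framedLang := by
  rcases hL with (rfl | rfl) | ⟨p, -, rfl⟩
  · rintro _ ⟨s, u, -, -, hu, rfl⟩
    exact ⟨_, Sig.base true true true s :: u, Or.inr rfl,
      List.forall_mem_cons.mpr ⟨trivial, hu.isBase⟩, rfl⟩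
  · rintro _ ⟨s, u, -, -, hu, rfl⟩
    refine ⟨_, u ++ [Sig.base false false true s], Or.inr rfl, ?_, by simp⟩
    exact List.forall_mem_append.mpr ⟨hu.isBase, List.forall_mem_singleton.mpr trivial⟩
  · rintro _ ⟨u, u', b, b', hu, hu', rfl⟩
    refine ⟨_, u ++ Sig.base b p.1.1 true p.1.2 :: Sig.base b' p.2.1 true p.2.2 :: u',
      Or.inr rfl, ?_, by simp⟩
    simp only [List.forall_mem_append, List.forall_mem_cons]
    exact ⟨hu.isBase, trivial, trivial, hu'.isBase⟩

lemma Qugly_subset_framedLang {S : Finset ℕ} {L : Language Sig} (hL : L ∈ Qugly S) :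
    L ≤ framedLang := by
  have hbase {u c u'} (hu : allS0 S u) (hc : inSigma0 S c) (hu' : allS0 S u') :
      ∀ d ∈ u ++ c :: u', d.IsBase :=
    List.forall_mem_append.mpr ⟨hu.isBase, List.forall_mem_cons.mpr ⟨hc.isBase, hu'.isBase⟩⟩
  rcases hL with rfl | rfl <;> rintro _ ⟨u, c, u', hu, hu', hc, -, rfl⟩
  exacts [⟨_, _, Or.inl rfl, hbase hu hc hu', by simp⟩,
    ⟨_, _, Or.inr rfl, hbase hu hc hu', by simp⟩]

lemma Qgood_cases {S : Finset ℕ} {L : Language Sig} (hL : L ∈ Qgood S) :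
    L = Qg1 ∨ L = Qg2 ∨ ∀ v ∈ L, ∀ c ∈ v, c.IsBase := by
  rcases hL with rfl | rfl | rfl | rfl | rfl | rfl | rfl | rfl
  · exact .inl rfl
  · exact .inr (.inl rfl)
  all_goals refine .inr (.inr ?_)
  any_goals
    rintro v (⟨c1, c2, rfl, h1, h2⟩ | ⟨c1, c2, rfl, h1, h2⟩) c hc <;>
      rcases List.mem_pair.mp hc with rfl | rfl
    exacts [h1.isBase, h2.isBase, h1.isBase, h2.isBase]
  all_goals
    rintro v (⟨c1, rfl, h1⟩ | ⟨c1, rfl, h1⟩) c hc <;> rw [List.mem_singleton.mp hc]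
    exacts [h1.isBase, h1.isBase]

lemma markedAtHead_of_mem_QQ {S : Finset ℕ} {F : Finset ((Bool × ℕ) × (Bool × ℕ))}
    {L : Language Sig} (hL : L ∈ QQ S F) : MarkedAtHead Sig.IsAlphaBeta L := by
  rcases hL with (hL | hL) | hL
  · rcases Qgood_cases hL with rfl | rfl | hL
    · refine markedAtHead_of_forall_not ?_
      rintro _ rfl c hc
      simp [List.mem_singleton.mp hc, Sig.IsAlphaBeta]
    · refine fun v hv v' hv' _ _ _ => ⟨?_, ?_⟩
      · rcases hv with rfl | rfl
        exacts [⟨_, [], rfl, .inl rfl⟩, ⟨_, [], rfl, .inr rfl⟩]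
      · rcases hv' with rfl | rfl <;> simp
    · exact markedAtHead_of_forall_not fun v hv c hc => (hL v hv c hc).not_isAlphaBeta
  · exact markedAtHead_framedLang.mono (Qbad_subset_framedLang hL)
  · exact markedAtHead_framedLang.mono (Qugly_subset_framedLang hL)

lemma markedAtLast_of_mem_QQ {S : Finset ℕ} {F : Finset ((Bool × ℕ) × (Bool × ℕ))}
    {L : Language Sig} (hL : L ∈ QQ S F) : MarkedAtLast (· = Sig.omega) L := by
  rcases hL with (hL | hL) | hL
  · rcases Qgood_cases hL with rfl | rfl | hL
    · rintro _ rfl _ rfl - - -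
      exact ⟨⟨[], _, rfl, rfl⟩, by simp⟩
    · refine markedAtLast_of_forall_not ?_
      rintro _ (rfl | rfl) c hc <;> simp [List.mem_singleton.mp hc]
    · exact markedAtLast_of_forall_not fun v hv c hc => (hL v hv c hc).ne_omega
  · exact markedAtLast_framedLang.mono (Qbad_subset_framedLang hL)
  · exact markedAtLast_framedLang.mono (Qugly_subset_framedLang hL)

theorem alpha_beta_omega_edges_general (S : Finset ℕ) (F : Finset ((Bool × ℕ) × (Bool × ℕ)))
    {V : Type} (a b : V) (q : List Sig) (hq : q ∈ Qstart S)
    (D₀ H : DB V (Bool × Sig)) (hD₀ : IsChainStruct D₀ a (greenW q) b)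
    (hH : FinalPos (biRC (QQ S F)) D₀ H) :
    (∀ x y (col : Bool), H x (col, Sig.alpha) y ∨ H x (col, Sig.beta) y → x = a) ∧
    (∀ x y (col : Bool), H x (col, Sig.omega) y → y = b) := by
  have hstart : EdgesStartAt (fun c => c.2.IsAlphaBeta) a H :=
    hH.forall_edges
      (EdgesStartAt.of_isChainStruct markedAtHead_framedLang (Qstart_subset_framedLang S hq) hD₀)
      fun _ _ hs hD => EdgesStartAt.step (fun _ => markedAtHead_of_mem_QQ) hD hs
  have hend : EdgesEndAt (fun c => c.2 = Sig.omega) b H :=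
    hH.forall_edges
      (EdgesEndAt.of_isChainStruct markedAtLast_framedLang (Qstart_subset_framedLang S hq) hD₀)
      fun _ _ hs hD => EdgesEndAt.step (fun _ => markedAtLast_of_mem_QQ) hD hs
  refine ⟨fun x y col hxy => ?_, fun x y col hxy => hend x _ y hxy rfl⟩
  rcases hxy with hxy | hxy
  exacts [hstart x _ y hxy (.inl rfl), hstart x _ y hxy (.inr rfl)]

/-- In every final position of a play of `Escape(Q₀, 𝒬)` started from
`D₀ = (G(q))[a,b]` with `q ∈ Q_start` : (1) every edge labeled `G(α)`, `R(α)`, `G(β)` or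
`R(β)` begins in `a`; (2) every edge labeled `G(ω)` or `R(ω)` ends in `b`. -/
theorem alpha_beta_omega_edges (S : Finset ℕ) (F : Finset ((Bool × ℕ) × (Bool × ℕ)))
    (hS : 0 ∈ S) (hF : ∀ p ∈ F, p.1.2 ∈ S ∧ p.2.2 ∈ S)
    {V : Type} (a b : V) (q : List Sig) (hq : q ∈ Qstart S)
    (D₀ H : DB V (Bool × Sig)) (hD₀ : IsChainStruct D₀ a (greenW q) b)
    (hH : FinalPos (biRC (QQ S F)) D₀ H) :
    (∀ x y (col : Bool), H x (col, Sig.alpha) y ∨ H x (col, Sig.beta) y → x = a) ∧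
    (∀ x y (col : Bool), H x (col, Sig.omega) y → y = b) :=
  alpha_beta_omega_edges_general S F a b q hq D₀ H hD₀ hH
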